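/- arXiv:2109.06093 — 2 statements merged into one kernel-verified Lean document; each statement's English description precedes it below -/
import Mathlib

section
/- Suppose t' > t are time steps such that the conditional expectation of V^π(s_{t'}) given (s_t, a_t) equals its conditional expectation given s_t alone (for trajectories sampled from π). Then the advantage satisfies A^π(s_t, a_t) = E[∑_{k=t}^{t'-1} γ^{k−t} r_k | s_t, a_t] − E[∑_{k=t}^{t'-1} γ^{k−t} r_k | s_t]. In particular, if the one-step transition distribution is independent of the action, t'=t+1 gives A^π(s,a) = r(s,a) − ∑_{a'} π(a'|s) r(s,a'). -/
open Finset Filter Topology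

variable {S A : Type*}

section Defs
variable [Fintype S] [Fintype A] [DecidableEq S] [DecidableEq A]

/-- Distribution of the state-action pair `(s_k, a_k)` for trajectories started in state `s0`
(with all actions, including the first, sampled from the policy `π`). -/
noncomputable def saDistS (π : S → A → ℝ) (P : S → A → S → ℝ) (s0 : S) : ℕ → S × A → ℝ
  | 0 => fun sa => (if sa.1 = s0 then 1 else 0) * π sa.1 sa.2
  | k + 1 => fun sa => (∑ p : S × A, saDistS π P s0 k p * P p.1 p.2 sa.1) * π sa.1 sa.2

/-- Distribution of `(s_k, a_k)` for trajectories started with `s_0 = s0`, `a_0 = a0`. -/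
noncomputable def saDistSA (π : S → A → ℝ) (P : S → A → S → ℝ) (s0 : S) (a0 : A) :
    ℕ → S × A → ℝ
  | 0 => fun sa => if sa = (s0, a0) then 1 else 0
  | k + 1 => fun sa => (∑ p : S × A, saDistSA π P s0 a0 k p * P p.1 p.2 sa.1) * π sa.1 sa.2

/-- Distribution of `(s_k, a_k)` for trajectories with initial state distribution `μ0`. -/
noncomputable def saDistI (π : S → A → ℝ) (P : S → A → S → ℝ) (μ0 : S → ℝ) : ℕ → S × A → ℝ
  | 0 => fun sa => μ0 sa.1 * π sa.1 sa.2
  | k + 1 => fun sa => (∑ p : S × A, saDistI π P μ0 k p * P p.1 p.2 sa.1) * π sa.1 sa.2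

/-- The value function `V^π(s)`: expected discounted return starting from `s`. -/
noncomputable def Vpi (π : S → A → ℝ) (P : S → A → S → ℝ) (r : S → A → ℝ) (γ : ℝ) (s : S) :
    ℝ :=
  ∑' k : ℕ, γ ^ k * ∑ sa : S × A, saDistS π P s k sa * r sa.1 sa.2

/-- The action-value function `Q^π(s, a)`: expected discounted return starting from `(s, a)`. -/
noncomputable def Qpi (π : S → A → ℝ) (P : S → A → S → ℝ) (r : S → A → ℝ) (γ : ℝ) (s : S)
    (a : A) : ℝ :=
  ∑' k : ℕ, γ ^ k * ∑ sa : S × A, saDistSA π P s a k sa * r sa.1 sa.2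

/-- The advantage function `A^π = Q^π - V^π`. -/
noncomputable def Api (π : S → A → ℝ) (P : S → A → S → ℝ) (r : S → A → ℝ) (γ : ℝ) (s : S)
    (a : A) : ℝ :=
  Qpi π P r γ s a - Vpi π P r γ s

/-- `π` is a policy: a probability distribution over actions at each state. -/
def IsPolicy (π : S → A → ℝ) : Prop := (∀ s a, 0 ≤ π s a) ∧ ∀ s, ∑ a : A, π s a = 1

/-- `P` is a transition kernel. -/
def IsKernel (P : S → A → S → ℝ) : Prop :=
  (∀ s a s', 0 ≤ P s a s') ∧ ∀ s a, ∑ s' : S, P s a s' = 1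

/-- `μ0` is a probability distribution over states. -/
def IsDist (μ0 : S → ℝ) : Prop := (∀ s, 0 ≤ μ0 s) ∧ ∑ s : S, μ0 s = 1

/-- `f` is `π`-centered: `∑_a π(a|s) f(s,a) = 0` at every state. -/
def IsCentered (π : S → A → ℝ) (f : S → A → ℝ) : Prop := ∀ s, ∑ a : A, π s a * f s a = 0

/-- Probability of the trajectory prefix `(s_0, a_0, …, s_n, a_n)` under policy `π`,
kernel `P` and initial state distribution `μ0`. -/
noncomputable def pathProb (π : S → A → ℝ) (P : S → A → S → ℝ) (μ0 : S → ℝ) (n : ℕ)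
    (τ : Fin (n + 1) → S × A) : ℝ :=
  μ0 (τ 0).1 * (∏ k : Fin (n + 1), π (τ k).1 (τ k).2) *
    ∏ k : Fin n, P (τ k.castSucc).1 (τ k.castSucc).2 (τ k.succ).1

/-- Expectation, over trajectory prefixes of length `n + 1`, of a function `f` of the prefix. -/
noncomputable def pathExp (π : S → A → ℝ) (P : S → A → S → ℝ) (μ0 : S → ℝ) (n : ℕ)
    (f : (Fin (n + 1) → S × A) → ℝ) : ℝ :=
  ∑ τ : Fin (n + 1) → S × A, pathProb π P μ0 n τ * f τ

/-- `n`-step bootstrapped action-value: `E[∑_{k<m} γ^k r_k + γ^m Vtgt(s_m) | s_0 = s, a_0 = a]`. -/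
noncomputable def nstepQ (π : S → A → ℝ) (P : S → A → S → ℝ) (r : S → A → ℝ) (γ : ℝ)
    (Vtgt : S → ℝ) (m : ℕ) (s : S) (a : A) : ℝ :=
  (∑ k ∈ Finset.range m, γ ^ k * ∑ sa : S × A, saDistSA π P s a k sa * r sa.1 sa.2)
    + γ ^ m * ∑ sa : S × A, saDistSA π P s a m sa * Vtgt sa.1

/-- `n`-step bootstrapped value: `E[∑_{k<m} γ^k r_k + γ^m Vtgt(s_m) | s_0 = s]`. -/
noncomputable def nstepV (π : S → A → ℝ) (P : S → A → S → ℝ) (r : S → A → ℝ) (γ : ℝ)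
    (Vtgt : S → ℝ) (m : ℕ) (s : S) : ℝ :=
  ∑ a : A, π s a * nstepQ π P r γ Vtgt m s a

/-- `π`-centering projection. -/
noncomputable def centerProj (π : S → A → ℝ) (f : S → A → ℝ) (s : S) (a : A) : ℝ :=
  f s a - ∑ a' : A, π s a' * f s a'

end Defs

/-!
Unrolling the Bellman equation `n` steps gives
`Q(s,a) = E[∑_{k<n} γ^k r_k | s_0 = s, a_0 = a] + γ^n E[Q(s_n,a_n) | s_0 = s, a_0 = a]`,
the tail being handled by the Chapman–Kolmogorov identity for the state-action chain.
For `n ≥ 1` the action `a_n` is drawn from `π(·|s_n)`, so `E[Q(s_n,a_n)] = E[V(s_n)]`.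
Averaging over `a ∼ π(·|s)` gives the same expansion of `V(s) = ∑_a π(a|s) Q(s,a)`, and under
the hypothesis the two bootstrap terms `γ^n E[V(s_n)]` cancel in `A = Q - V`. When `P(s,a)`
does not depend on `a`, neither does the law of `s_1`, so the hypothesis holds with `n = 1`.
-/

section Occupancy

variable [Fintype S] [Fintype A] [DecidableEq S] [DecidableEq A]
  {π : S → A → ℝ} {P : S → A → S → ℝ}

theorem saDistSA_nonneg (hπ : IsPolicy π) (hP : IsKernel P) (s : S) (a : A) (n : ℕ)
    (q : S × A) : 0 ≤ saDistSA π P s a n q := by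
  induction n generalizing q with
  | zero => simp only [saDistSA]; split_ifs <;> norm_num
  | succ n ih =>
    exact mul_nonneg (sum_nonneg fun p _ => mul_nonneg (ih p) (hP.1 _ _ _)) (hπ.1 _ _)

theorem sum_saDistSA (hπ : IsPolicy π) (hP : IsKernel P) (s : S) (a : A) (n : ℕ) :
    ∑ q, saDistSA π P s a n q = 1 := by
  induction n with
  | zero => simp [saDistSA]
  | succ n ih =>
    calc ∑ q, saDistSA π P s a (n + 1) q
        = ∑ s', ∑ p : S × A, saDistSA π P s a n p * P p.1 p.2 s' := by
          rw [Fintype.sum_prod_type]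
          refine sum_congr rfl fun s' _ => ?_
          simp only [saDistSA]
          rw [← mul_sum, hπ.2, mul_one]
      _ = ∑ p, saDistSA π P s a n p := by
          rw [sum_comm]
          refine sum_congr rfl fun p _ => ?_
          rw [← mul_sum, hP.2, mul_one]
      _ = 1 := ih

theorem abs_sum_saDistSA_mul_le (hπ : IsPolicy π) (hP : IsKernel P) (s : S) (a : A) (n : ℕ)
    (f : S × A → ℝ) : |∑ q, saDistSA π P s a n q * f q| ≤ ∑ q, |f q| := by
  refine (abs_sum_le_sum_abs _ _).trans (sum_le_sum fun q _ => ?_)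
  have hle : saDistSA π P s a n q ≤ 1 := sum_saDistSA hπ hP s a n ▸
    single_le_sum (fun p _ => saDistSA_nonneg hπ hP s a n p) (mem_univ q)
  rw [abs_mul, abs_of_nonneg (saDistSA_nonneg hπ hP s a n q)]
  exact mul_le_of_le_one_left (abs_nonneg _) hle

theorem summable_discounted_saDistSA (hπ : IsPolicy π) (hP : IsKernel P) {γ : ℝ}
    (hγ0 : 0 ≤ γ) (hγ1 : γ < 1) (s : S) (a : A) (f : S × A → ℝ) :
    Summable fun k : ℕ => γ ^ k * ∑ q, saDistSA π P s a k q * f q := by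
  refine Summable.of_norm_bounded
    ((summable_geometric_of_lt_one hγ0 hγ1).mul_right (∑ q, |f q|)) fun k => ?_
  rw [Real.norm_eq_abs, abs_mul, abs_pow, abs_of_nonneg hγ0]
  exact mul_le_mul_of_nonneg_left (abs_sum_saDistSA_mul_le hπ hP s a k f) (pow_nonneg hγ0 k)

theorem saDistSA_add (s : S) (a : A) (k j : ℕ) (q : S × A) :
    saDistSA π P s a (k + j) q = ∑ p, saDistSA π P s a k p * saDistSA π P p.1 p.2 j q := by
  induction j generalizing q with
  | zero => simp [saDistSA]
  | succ j ih =>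
    rw [← add_assoc]
    simp only [saDistSA, ih, sum_mul, mul_sum]
    rw [sum_comm]
    exact sum_congr rfl fun _ _ => sum_congr rfl fun _ _ => by ring

theorem saDistS_eq_sum (s : S) (n : ℕ) (q : S × A) :
    saDistS π P s n q = ∑ a, π s a * saDistSA π P s a n q := by
  induction n generalizing q with
  | zero =>
    obtain ⟨s', a'⟩ := q
    by_cases h : s' = s
    · subst h; simp [saDistS, saDistSA]
    · simp [saDistS, saDistSA, h]
  | succ n ih =>
    simp only [saDistS, saDistSA, ih, sum_mul, mul_sum]
    rw [sum_comm]
    exact sum_congr rfl fun _ _ => sum_congr rfl fun _ _ => by ring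


theorem sum_saDistSA_succ_mul (hπ : IsPolicy π) (s : S) (a : A) (n : ℕ) (f : S → A → ℝ) :
    ∑ q, saDistSA π P s a (n + 1) q * f q.1 q.2
      = ∑ q, saDistSA π P s a (n + 1) q * ∑ b, π q.1 b * f q.1 b := by
  rw [Fintype.sum_prod_type, Fintype.sum_prod_type]
  refine sum_congr rfl fun s' _ => ?_
  simp only [saDistSA, mul_assoc, ← mul_sum]
  rw [← sum_mul, hπ.2, one_mul]

end Occupancy

section ValueFunctions

variable [Fintype S] [Fintype A] [DecidableEq S] [DecidableEq A]
  {π : S → A → ℝ} {P : S → A → S → ℝ} {r : S → A → ℝ} {γ : ℝ}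

theorem Vpi_eq_sum_Qpi (hπ : IsPolicy π) (hP : IsKernel P) (hγ0 : 0 ≤ γ) (hγ1 : γ < 1)
    (s : S) : Vpi π P r γ s = ∑ a, π s a * Qpi π P r γ s a := by
  have hstep : ∀ k : ℕ, γ ^ k * ∑ q, saDistS π P s k q * r q.1 q.2
      = ∑ a, π s a * (γ ^ k * ∑ q, saDistSA π P s a k q * r q.1 q.2) := fun k => by
    simp only [saDistS_eq_sum, sum_mul, mul_sum]
    rw [sum_comm]
    exact sum_congr rfl fun _ _ => sum_congr rfl fun _ _ => by ring
  rw [Vpi, tsum_congr hstep, Summable.tsum_finsetSum fun a _ =>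
    (summable_discounted_saDistSA hπ hP hγ0 hγ1 s a _).mul_left (π s a)]
  simp only [tsum_mul_left, Qpi]

theorem Qpi_eq_sum_range_add (hπ : IsPolicy π) (hP : IsKernel P) (hγ0 : 0 ≤ γ) (hγ1 : γ < 1)
    (s : S) (a : A) (n : ℕ) :
    Qpi π P r γ s a = ∑ k ∈ range n, γ ^ k * ∑ q, saDistSA π P s a k q * r q.1 q.2
      + γ ^ n * ∑ p, saDistSA π P s a n p * Qpi π P r γ p.1 p.2 := by
  conv_lhs => rw [Qpi, ← (summable_discounted_saDistSA hπ hP hγ0 hγ1 s a _).sum_add_tsum_nat_add n]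
  congr 1
  calc ∑' j, γ ^ (j + n) * ∑ q, saDistSA π P s a (j + n) q * r q.1 q.2
      = ∑' j, γ ^ n * ∑ p, saDistSA π P s a n p *
          (γ ^ j * ∑ q, saDistSA π P p.1 p.2 j q * r q.1 q.2) := by
        refine tsum_congr fun j => ?_
        simp only [add_comm j n, saDistSA_add s a n j, pow_add, sum_mul, mul_sum]
        rw [sum_comm]
        exact sum_congr rfl fun _ _ => sum_congr rfl fun _ _ => by ring
    _ = γ ^ n * ∑ p, saDistSA π P s a n p * Qpi π P r γ p.1 p.2 := by
        rw [tsum_mul_left, Summable.tsum_finsetSum fun p _ =>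
          (summable_discounted_saDistSA hπ hP hγ0 hγ1 p.1 p.2 fun q => r q.1 q.2).mul_left
            (saDistSA π P s a n p)]
        simp only [tsum_mul_left, Qpi]

theorem Qpi_eq_sum_range_add_Vpi (hπ : IsPolicy π) (hP : IsKernel P) (hγ0 : 0 ≤ γ)
    (hγ1 : γ < 1) (s : S) (a : A) {n : ℕ} (hn : 0 < n) :
    Qpi π P r γ s a = ∑ k ∈ range n, γ ^ k * ∑ q, saDistSA π P s a k q * r q.1 q.2
      + γ ^ n * ∑ p, saDistSA π P s a n p * Vpi π P r γ p.1 := by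
  obtain ⟨m, rfl⟩ := Nat.exists_eq_add_one_of_ne_zero hn.ne'
  simp only [Qpi_eq_sum_range_add hπ hP hγ0 hγ1 s a (m + 1), Vpi_eq_sum_Qpi hπ hP hγ0 hγ1,
    sum_saDistSA_succ_mul hπ s a m (Qpi π P r γ)]

theorem Api_eq_sub_of_sum_saDistSA_Vpi_eq (hπ : IsPolicy π) (hP : IsKernel P) (hγ0 : 0 ≤ γ)
    (hγ1 : γ < 1) (s : S) (a : A) {n : ℕ} (hn : 0 < n)
    (h : ∑ q, saDistSA π P s a n q * Vpi π P r γ q.1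
      = ∑ b, π s b * ∑ q, saDistSA π P s b n q * Vpi π P r γ q.1) :
    Api π P r γ s a = ∑ k ∈ range n, γ ^ k * ∑ q, saDistSA π P s a k q * r q.1 q.2
      - ∑ b, π s b * ∑ k ∈ range n, γ ^ k * ∑ q, saDistSA π P s b k q * r q.1 q.2 := by
  have hQ := fun b => Qpi_eq_sum_range_add_Vpi (r := r) hπ hP hγ0 hγ1 s b hn
  rw [Api, Vpi_eq_sum_Qpi hπ hP hγ0 hγ1 s, hQ a]
  simp only [hQ, mul_add, sum_add_distrib, h, mul_left_comm (π s _) (γ ^ n), ← mul_sum]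
  ring

theorem Api_eq_sub_of_transition_indep (hπ : IsPolicy π) (hP : IsKernel P) (hγ0 : 0 ≤ γ)
    (hγ1 : γ < 1) (hind : ∀ s a a', P s a = P s a') (s : S) (a : A) :
    Api π P r γ s a = r s a - ∑ b, π s b * r s b := by
  have hD1 : ∀ b q, saDistSA π P s b 1 q = saDistSA π P s a 1 q := fun b q => by
    simp [saDistSA, hind s b a]
  have h := Api_eq_sub_of_sum_saDistSA_Vpi_eq (r := r) hπ hP hγ0 hγ1 s a one_pos
    (by simp only [hD1]; rw [← sum_mul, hπ.2, one_mul])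
  simpa [saDistSA] using h

end ValueFunctions

/-- if `E[V^π(s_{t'}) | s_t, a_t] = E[V^π(s_{t'}) | s_t]` for some `t' > t`
(stated, via the Markov property, for a start state-action pair and horizon `n = t' - t > 0`),
then the advantage equals the difference of truncated expected returns; in particular, if the
transition distribution is action-independent then `A^π(s,a) = r(s,a) - ∑_{a'} π(a'|s) r(s,a')`. -/
theorem advantage_local
    [Fintype S] [Fintype A] [DecidableEq S] [DecidableEq A]
    (π : S → A → ℝ) (P : S → A → S → ℝ) (r : S → A → ℝ) (γ : ℝ)
    (hπ : IsPolicy π) (hP : IsKernel P) (hγ0 : 0 ≤ γ) (hγ1 : γ < 1) :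
    (∀ (s : S) (a : A) (n : ℕ), 0 < n →
      (∑ sa : S × A, saDistSA π P s a n sa * Vpi π P r γ sa.1
          = ∑ a0 : A, π s a0 * ∑ sa : S × A, saDistSA π P s a0 n sa * Vpi π P r γ sa.1) →
      Api π P r γ s a
        = (∑ k ∈ Finset.range n, γ ^ k * ∑ sa : S × A, saDistSA π P s a k sa * r sa.1 sa.2)
          - ∑ a0 : A, π s a0 *
              ∑ k ∈ Finset.range n, γ ^ k * ∑ sa : S × A, saDistSA π P s a0 k sa * r sa.1 sa.2)
    ∧ ((∀ s a a', P s a = P s a') → ∀ (s : S) (a : A),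
        Api π P r γ s a = r s a - ∑ a' : A, π s a' * r s a') :=
  ⟨fun s a _ hn h => Api_eq_sub_of_sum_saDistSA_Vpi_eq hπ hP hγ0 hγ1 s a hn h,
    fun hind => Api_eq_sub_of_transition_indep hπ hP hγ0 hγ1 hind⟩
end

section
/- (Bootstrapped DAE, value part) Let V_target: S → ℝ be any function and Â any π-centered function. Define L(Â, V̂) = E_{τ∼π}[(∑_{t'=0}^{t−1} γ^{t'}(r_{t'} − Â(s_{t'},a_{t'})) + γ^t V_target(s_t) − V̂(s_0))²]. Then the minimizer V̂* over functions V̂: S → ℝ satisfies, for every s with p(s_0=s)>0: V̂*(s) = E[∑_{t'=0}^{t−1} γ^{t'} r_{t'} + γ^t V_target(s_t) | s_0 = s], independently of the choice of the π-centered Â. -/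
open Finset Filter Topology

variable {S A : Type*}

/-!
The loss is a weighted least-squares problem in the values `V̂(s)`, one coordinate per initial
state. Perturbing `V̂` at `s` alone shows that at a minimizer the residual has zero mean on the
event `s₀ = s`; since `μ0 s > 0`, this says that `V̂*(s)` is the conditional expectation of the
bootstrapped return given `s₀ = s`. That expectation is computed from the marginals of
`(s_k, a_k)`, and the `Â`-terms vanish because a `π`-centered function has zero mean under
`π(· | s)` at every state.
-/

theorem eq_zero_of_forall_mul_le_mul_sq {a b : ℝ} (h : ∀ ε : ℝ, b * ε ≤ a * ε ^ 2) : b = 0 := by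
  have hc : 0 < |a| + 1 := by positivity
  -- at `ε = b / (|a| + 1)` the linear term `b ε` beats the quadratic one unless `b = 0`
  have key := h (b / (|a| + 1))
  rw [div_pow, ← mul_div_assoc, ← mul_div_assoc, div_le_div_iff₀ hc (by positivity)] at key
  have hpos : 0 < (|a| + 1) * (|a| + 1 - a) := by nlinarith [le_abs_self a]
  have hb : b ^ 2 * ((|a| + 1) * (|a| + 1 - a)) ≤ 0 := by nlinarith
  exact pow_eq_zero_iff two_ne_zero |>.mp
    (le_antisymm (nonpos_of_mul_nonpos_left hb hpos) (sq_nonneg b))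

/-- Normal equation of a weighted least-squares fit `V ∘ h ≈ F`. -/
theorem sum_mul_ite_residual_eq_zero {X κ : Type*} [Fintype X] [DecidableEq κ]
    (w F : X → ℝ) (h : X → κ) (V : κ → ℝ)
    (hV : ∀ V' : κ → ℝ, ∑ x, w x * (F x - V (h x)) ^ 2 ≤ ∑ x, w x * (F x - V' (h x)) ^ 2)
    (s : κ) : ∑ x, w x * (if h x = s then F x - V s else 0) = 0 := by
  set D := ∑ x, w x * (if h x = s then F x - V s else 0)
  set C := ∑ x, w x * (if h x = s then 1 else 0)
  suffices 2 * D = 0 by linarith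
  refine eq_zero_of_forall_mul_le_mul_sq (a := C) fun ε => ?_
  have hε := hV (Function.update V s (V s + ε))
  have hexpand : ∑ x, w x * (F x - Function.update V s (V s + ε) (h x)) ^ 2
      = ∑ x, w x * (F x - V (h x)) ^ 2 - 2 * D * ε + C * ε ^ 2 := by
    simp only [D, C, mul_sum, ← sum_sub_distrib, ← sum_add_distrib, sum_mul]
    refine sum_congr rfl fun x _ => ?_
    by_cases hx : h x = s
    · simp only [hx, Function.update_self, if_true]
      ring
    · simp only [hx, ne_eq, not_false_eq_true, Function.update_of_ne, if_false]
      ring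
  linarith

section Trajectories
variable {π : S → A → ℝ} {P : S → A → S → ℝ} {ν : S → ℝ}

theorem pathProb_snoc {n : ℕ} (τ : Fin (n + 1) → S × A) (x : S × A) :
    pathProb π P ν (n + 1) (Fin.snoc τ x) =
      pathProb π P ν n τ * (P (τ (Fin.last n)).1 (τ (Fin.last n)).2 x.1 * π x.1 x.2) := by
  have h0 : (Fin.snoc τ x : Fin (n + 2) → S × A) 0 = τ 0 := Fin.snoc_castSucc (i := 0) ..
  rw [pathProb, pathProb, Fin.prod_univ_castSucc (n := n), Fin.prod_univ_castSucc (n := n + 1)]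
  simp only [h0, Fin.snoc_castSucc, Fin.snoc_last, Fin.succ_last, Fin.succ_castSucc]
  ring

variable [Fintype S] [Fintype A]

theorem pathExp_zero (f : (Fin 1 → S × A) → ℝ) :
    pathExp π P ν 0 f = ∑ x : S × A, ν x.1 * π x.1 x.2 * f fun _ => x := by
  rw [pathExp, ← (Equiv.funUnique (Fin 1) (S × A)).symm.sum_comp]
  refine sum_congr rfl fun x _ => ?_
  simp only [pathProb, Nat.reduceAdd, Fin.prod_univ_one, univ_eq_empty, prod_empty, mul_one]
  rfl

theorem pathExp_succ {n : ℕ} (f : (Fin (n + 2) → S × A) → ℝ) :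
    pathExp π P ν (n + 1) f = pathExp π P ν n fun τ =>
      ∑ x : S × A, P (τ (Fin.last n)).1 (τ (Fin.last n)).2 x.1 * π x.1 x.2 * f (Fin.snoc τ x) := by
  rw [pathExp, ← (Fin.snocEquiv fun _ => S × A).sum_comp, Fintype.sum_prod_type, sum_comm]
  refine sum_congr rfl fun τ _ => ?_
  rw [mul_sum]
  refine sum_congr rfl fun x _ => ?_
  change pathProb π P ν (n + 1) (Fin.snoc τ x) * f (Fin.snoc τ x) = _
  rw [pathProb_snoc]
  ring

theorem pathExp_congr {n : ℕ} {f g : (Fin (n + 1) → S × A) → ℝ} (h : ∀ τ, f τ = g τ) :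
    pathExp π P ν n f = pathExp π P ν n g := by
  simp only [pathExp, h]

theorem pathExp_add {n : ℕ} (f g : (Fin (n + 1) → S × A) → ℝ) :
    pathExp π P ν n (fun τ => f τ + g τ) = pathExp π P ν n f + pathExp π P ν n g := by
  simp only [pathExp, mul_add, sum_add_distrib]

theorem pathExp_sub {n : ℕ} (f g : (Fin (n + 1) → S × A) → ℝ) :
    pathExp π P ν n (fun τ => f τ - g τ) = pathExp π P ν n f - pathExp π P ν n g := by
  simp only [pathExp, mul_sub, sum_sub_distrib]

theorem pathExp_const_mul {n : ℕ} (c : ℝ) (f : (Fin (n + 1) → S × A) → ℝ) :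
    pathExp π P ν n (fun τ => c * f τ) = c * pathExp π P ν n f := by
  simp only [pathExp, mul_sum, mul_left_comm]

theorem pathExp_sum {ι : Type*} {n : ℕ} (I : Finset ι) (f : ι → (Fin (n + 1) → S × A) → ℝ) :
    pathExp π P ν n (fun τ => ∑ i ∈ I, f i τ) = ∑ i ∈ I, pathExp π P ν n (f i) := by
  simp only [pathExp, mul_sum]
  exact sum_comm

theorem sum_kernel_mul_policy (hπ : ∀ s, ∑ a, π s a = 1) (hP : ∀ s a, ∑ s', P s a s' = 1)
    (s : S) (a : A) : ∑ x : S × A, P s a x.1 * π x.1 x.2 = 1 := by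
  simp only [Fintype.sum_prod_type, ← mul_sum, hπ, mul_one, hP]

theorem pathExp_apply (hπ : ∀ s, ∑ a, π s a = 1) (hP : ∀ s a, ∑ s', P s a s' = 1) {n : ℕ}
    (k : Fin (n + 1)) (g : S × A → ℝ) :
    pathExp π P ν n (fun τ => g (τ k)) = ∑ x, saDistI π P ν k x * g x := by
  induction n generalizing g with
  | zero => simp [pathExp_zero, Fin.fin_one_eq_zero k, saDistI]
  | succ n ih =>
    rw [pathExp_succ]
    induction k using Fin.lastCases with
    | last =>
      simp only [Fin.snoc_last, Fin.val_last, saDistI]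
      rw [ih (Fin.last n) fun y => ∑ x : S × A, P y.1 y.2 x.1 * π x.1 x.2 * g x]
      simp only [Fin.val_last, mul_sum, sum_mul]
      rw [sum_comm]
      exact sum_congr rfl fun x _ => sum_congr rfl fun y _ => by ring
    | cast j =>
      simp only [Fin.snoc_castSucc, Fin.val_castSucc, ← ih j]
      refine pathExp_congr fun τ => ?_
      rw [← sum_mul, sum_kernel_mul_policy hπ hP, one_mul]

theorem pathExp_const (hπ : ∀ s, ∑ a, π s a = 1) (hP : ∀ s a, ∑ s', P s a s' = 1) {n : ℕ}
    (c : ℝ) : pathExp π P ν n (fun _ => c) = (∑ s, ν s) * c := by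
  rw [pathExp_apply hπ hP 0 fun _ => c, ← sum_mul, Fintype.sum_prod_type]
  simp only [Fin.val_zero, saDistI, ← mul_sum, hπ, mul_one]

theorem sum_saDistI_mul_eq_zero {f : S → A → ℝ} (hf : IsCentered π f) (k : ℕ) :
    ∑ x : S × A, saDistI π P ν k x * f x.1 x.2 = 0 := by
  have key : ∀ c : S → ℝ, ∑ x : S × A, c x.1 * π x.1 x.2 * f x.1 x.2 = 0 := fun c => by
    simp only [Fintype.sum_prod_type, mul_assoc, ← mul_sum, hf _, mul_zero, sum_const_zero]
  cases k with
  | zero => exact key ν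
  | succ k => exact key fun s => ∑ y : S × A, saDistI π P ν k y * P y.1 y.2 s

theorem saDistS_eq_saDistI [DecidableEq S] (s : S) :
    saDistS π P s = saDistI π P (fun s' => if s' = s then 1 else 0) := by
  ext k : 1
  induction k with
  | zero => rfl
  | succ k ih => simp only [saDistS, saDistI, ih]

theorem pathExp_ite_fst_zero [DecidableEq S] {n : ℕ} (s : S) (f : (Fin (n + 1) → S × A) → ℝ) :
    pathExp π P ν n (fun τ => if (τ 0).1 = s then f τ else 0)
      = ν s * pathExp π P (fun s' => if s' = s then 1 else 0) n f := by
  simp only [pathExp, mul_sum]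
  refine sum_congr rfl fun τ _ => ?_
  by_cases h : (τ 0).1 = s
  · simp only [pathProb, h, if_true, one_mul]
    ring
  · simp only [pathProb, h, if_false, mul_zero, zero_mul]

theorem pathExp_bootstrappedReturn_of_isCentered (hπ : ∀ s, ∑ a, π s a = 1)
    (hP : ∀ s a, ∑ s', P s a s' = 1) {Ahat : S → A → ℝ} (hA : IsCentered π Ahat)
    (r : S → A → ℝ) (γ : ℝ) (t : ℕ) (Vtgt : S → ℝ) :
    pathExp π P ν t (fun τ =>
      (∑ k : Fin t, γ ^ (k : ℕ) *
          (r (τ k.castSucc).1 (τ k.castSucc).2 - Ahat (τ k.castSucc).1 (τ k.castSucc).2))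
        + γ ^ t * Vtgt (τ (Fin.last t)).1)
      = (∑ k ∈ range t, γ ^ k * ∑ x : S × A, saDistI π P ν k x * r x.1 x.2)
        + γ ^ t * ∑ x : S × A, saDistI π P ν t x * Vtgt x.1 := by
  rw [pathExp_add, pathExp_sum, pathExp_const_mul,
    pathExp_apply hπ hP (Fin.last t) fun x => Vtgt x.1, Fin.val_last, ← Fin.sum_univ_eq_sum_range]
  congr 1
  refine sum_congr rfl fun k _ => ?_
  rw [pathExp_const_mul, pathExp_sub, pathExp_apply hπ hP k.castSucc fun x => r x.1 x.2,
    pathExp_apply hπ hP k.castSucc fun x => Ahat x.1 x.2, sum_saDistI_mul_eq_zero hA, sub_zero,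
    Fin.val_castSucc]

end Trajectories

theorem bootstrapped_dae_value_part_general
    [Fintype S] [Fintype A] [DecidableEq S]
    (π : S → A → ℝ) (P : S → A → S → ℝ) (r : S → A → ℝ) (γ : ℝ) (μ0 : S → ℝ)
    (hπ : IsPolicy π) (hP : IsKernel P)
    (t : ℕ) (Vtgt : S → ℝ) :
    ∀ Ahat : S → A → ℝ, IsCentered π Ahat →
      ∀ Vstar : S → ℝ,
        (∀ Vhat : S → ℝ,
          pathExp π P μ0 t (fun τ =>
            ((∑ k : Fin t, γ ^ (k : ℕ) *
                (r (τ k.castSucc).1 (τ k.castSucc).2 - Ahat (τ k.castSucc).1 (τ k.castSucc).2))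
              + γ ^ t * Vtgt (τ (Fin.last t)).1 - Vstar (τ 0).1) ^ 2)
          ≤ pathExp π P μ0 t (fun τ =>
            ((∑ k : Fin t, γ ^ (k : ℕ) *
                (r (τ k.castSucc).1 (τ k.castSucc).2 - Ahat (τ k.castSucc).1 (τ k.castSucc).2))
              + γ ^ t * Vtgt (τ (Fin.last t)).1 - Vhat (τ 0).1) ^ 2)) →
        ∀ s : S, 0 < μ0 s →
          Vstar s
            = (∑ k ∈ Finset.range t, γ ^ k * ∑ sa : S × A, saDistS π P s k sa * r sa.1 sa.2)
              + γ ^ t * ∑ sa : S × A, saDistS π P s t sa * Vtgt sa.1 := by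
  intro Ahat hA Vstar hmin s hs
  have hnormal : pathExp π P μ0 t (fun τ => if (τ 0).1 = s then
      (∑ k : Fin t, γ ^ (k : ℕ) *
          (r (τ k.castSucc).1 (τ k.castSucc).2 - Ahat (τ k.castSucc).1 (τ k.castSucc).2))
        + γ ^ t * Vtgt (τ (Fin.last t)).1 - Vstar s else 0) = 0 :=
    sum_mul_ite_residual_eq_zero _ _ (fun τ : Fin (t + 1) → S × A => (τ 0).1) Vstar hmin s
  rw [pathExp_ite_fst_zero, pathExp_sub, pathExp_const hπ.2 hP.2,
    pathExp_bootstrappedReturn_of_isCentered hπ.2 hP.2 hA, ← saDistS_eq_saDistI] at hnormal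
  simp only [sum_ite_eq', mem_univ, if_true, one_mul] at hnormal
  exact (sub_eq_zero.1 ((mul_eq_zero.1 hnormal).resolve_left hs.ne')).symm

/-- Bootstrapped DAE, value part: for any bootstrapping target `Vtgt` and any
`π`-centered `Â`, the minimizer `V̂*` of
`L(Â,V̂) = E[(∑_{t'<t} γ^{t'}(r_{t'} - Â_{t'}) + γ^t Vtgt(s_t) - V̂(s_0))²]`
over all `V̂ : S → ℝ` satisfies, for every `s` with `μ0(s) > 0`,
`V̂*(s) = E[∑_{t'<t} γ^{t'} r_{t'} + γ^t Vtgt(s_t) | s_0 = s]`, independently of `Â`. -/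
theorem bootstrapped_dae_value_part
    [Fintype S] [Fintype A] [DecidableEq S] [DecidableEq A]
    (π : S → A → ℝ) (P : S → A → S → ℝ) (r : S → A → ℝ) (γ : ℝ) (μ0 : S → ℝ)
    (hπ : IsPolicy π) (hP : IsKernel P) (hμ : IsDist μ0) (hγ0 : 0 ≤ γ) (hγ1 : γ < 1)
    (t : ℕ) (Vtgt : S → ℝ) :
    ∀ Ahat : S → A → ℝ, IsCentered π Ahat →
      ∀ Vstar : S → ℝ,
        (∀ Vhat : S → ℝ,
          pathExp π P μ0 t (fun τ =>
            ((∑ k : Fin t, γ ^ (k : ℕ) *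
                (r (τ k.castSucc).1 (τ k.castSucc).2 - Ahat (τ k.castSucc).1 (τ k.castSucc).2))
              + γ ^ t * Vtgt (τ (Fin.last t)).1 - Vstar (τ 0).1) ^ 2)
          ≤ pathExp π P μ0 t (fun τ =>
            ((∑ k : Fin t, γ ^ (k : ℕ) *
                (r (τ k.castSucc).1 (τ k.castSucc).2 - Ahat (τ k.castSucc).1 (τ k.castSucc).2))
              + γ ^ t * Vtgt (τ (Fin.last t)).1 - Vhat (τ 0).1) ^ 2)) →
        ∀ s : S, 0 < μ0 s →
          Vstar s
            = (∑ k ∈ Finset.range t, γ ^ k * ∑ sa : S × A, saDistS π P s k sa * r sa.1 sa.2)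
              + γ ^ t * ∑ sa : S × A, saDistS π P s t sa * Vtgt sa.1 :=
  bootstrapped_dae_value_part_general π P r γ μ0 hπ hP t Vtgt
end
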